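/- arXiv:1410.5398 — 2 statements merged into one kernel-verified Lean document; each statement's English description precedes it below -/
import Mathlib

section
/- Let 1 ≤ p < d, let U be a real d × p matrix and V a real d × (d−p) matrix such that the d × d matrix [U V] is invertible, let Δ := {y ∈ ℝ^p : there exists λ ∈ ℝ^{d−p} with ‖Uy + Vλ‖∞ ≤ 1}, and for y ∈ ℝ^p let Q_y := {λ ∈ ℝ^{d−p} : ‖Uy + Vλ‖∞ ≤ 1} and 𝒱(y) := the (d−p)-dimensional Lebesgue measure of Q_y. Then the map 𝒱 restricted to Δ is continuous, i.e., 𝒱 : Δ → [0, ∞) is a continuous function on the compact set Δ. -/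
/-!
For `a = U y`, the slice `Q_a = {l | ‖a + V l‖∞ ≤ 1}` is cut out by the constraints
`|a i + (V l) i| ≤ 1`. Since `V` is injective the slices are locally uniformly bounded, so by
dominated convergence it suffices that, for almost every `l`, membership of `l` in `Q_a` is
eventually constant as `a → a₀` inside the domain. A row with `V i = 0` constrains `a` alone
and holds throughout the domain; for every other row, almost every `l` avoids the two null
hyperplanes `a₀ i + (V l) i = ±1`, so that constraint is eventually decided as at `a₀`.
-/

open MeasureTheory Filter Set Topology Function Matrix
open scoped NNReal

theorem ContinuousAt.eventually_le_const_iff {X α : Type*} [TopologicalSpace X] [LinearOrder α]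
    [TopologicalSpace α] [OrderClosedTopology α] {f : X → α} {x₀ : X} {c : α}
    (hf : ContinuousAt f x₀) (hc : f x₀ ≠ c) :
    ∀ᶠ x in 𝓝 x₀, (f x ≤ c ↔ f x₀ ≤ c) := by
  rcases hc.lt_or_gt with hlt | hgt
  · exact (hf.eventually_lt_const hlt).mono fun x hx => iff_of_true hx.le hlt.le
  · exact (hf.eventually_const_lt hgt).mono fun x hx => iff_of_false hx.not_ge hgt.not_ge

theorem MeasureTheory.Measure.addHaar_preimage_singleton_of_ne_zero {E : Type*}
    [NormedAddCommGroup E] [NormedSpace ℝ E] [MeasurableSpace E] [BorelSpace E]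
    [FiniteDimensional ℝ E] (μ : Measure E) [μ.IsAddHaarMeasure] {φ : E →ₗ[ℝ] ℝ}
    (hφ : φ ≠ 0) (c : ℝ) : μ (φ ⁻¹' {c}) = 0 := by
  obtain ⟨x₀, rfl⟩ := LinearMap.surjective_of_ne_zero hφ c
  have hker : (· + x₀) ⁻¹' (φ ⁻¹' {φ x₀}) = LinearMap.ker φ := by
    ext x; simp
  rw [← measure_preimage_add_right μ x₀, hker]
  exact Measure.addHaar_submodule μ _ (by rwa [Ne, LinearMap.ker_eq_top])

theorem Matrix.mulVec_injective_of_isUnit_det_submatrix_fromCols {K m n₁ n₂ : Type*} [Field K]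
    [Fintype m] [DecidableEq m] [Fintype n₁] [Fintype n₂] {U : Matrix m n₁ K}
    {V : Matrix m n₂ K} (e : m ≃ n₁ ⊕ n₂)
    (h : IsUnit ((fromCols U V).submatrix id e).det) :
    Injective V.mulVec := by
  have hA : Injective ((fromCols U V).submatrix id e).mulVec :=
    mulVec_injective_iff_isUnit.2 ((isUnit_iff_isUnit_det _).2 h)
  have hV : ∀ l, V *ᵥ l = (fromCols U V).submatrix id e *ᵥ (Sum.elim 0 l ∘ e) := fun l => by
    simp [submatrix_mulVec_equiv, comp_assoc]
  intro l l' hl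
  rw [hV, hV] at hl
  have hsum := congrArg (· ∘ e.symm) (hA hl)
  simpa [comp_assoc] using congrArg (· ∘ Sum.inr) hsum

namespace Matrix

variable {m n : Type*} [Fintype m] [Fintype n]

theorem ae_abs_add_mulVec_apply_ne (V : Matrix m n ℝ) (a : m → ℝ) (r : ℝ) :
    ∀ᵐ l : n → ℝ, ∀ i, V i ≠ 0 → |a i + (V *ᵥ l) i| ≠ r := by
  classical
  rw [ae_all_iff]
  intro i
  by_cases hi : V i = 0
  · exact ae_of_all _ fun _ h => absurd hi h
  set φ : (n → ℝ) →ₗ[ℝ] ℝ := (LinearMap.proj i).comp V.mulVecLin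
  have hφ : φ ≠ 0 := fun h => hi <| funext fun j => by
    simpa [φ, mulVec_single_one] using LinearMap.congr_fun h (Pi.single j 1)
  have hnull : volume (φ ⁻¹' {r - a i} ∪ φ ⁻¹' {-r - a i}) = 0 :=
    measure_union_null (Measure.addHaar_preimage_singleton_of_ne_zero _ hφ _)
      (Measure.addHaar_preimage_singleton_of_ne_zero _ hφ _)
  filter_upwards [measure_eq_zero_iff_ae_notMem.1 hnull] with l hl _ habs
  apply hl
  rcases eq_or_eq_neg_of_abs_eq habs with h | h
  · exact Or.inl (by simp [φ]; linarith)
  · exact Or.inr (by simp [φ]; linarith)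

def unitBallSlice (V : Matrix m n ℝ) (a : m → ℝ) : Set (n → ℝ) :=
  {l | ‖a + V *ᵥ l‖ ≤ 1}

variable (V : Matrix m n ℝ)

theorem mem_unitBallSlice_iff {a : m → ℝ} {l : n → ℝ} :
    l ∈ V.unitBallSlice a ↔ ∀ i, |a i + (V *ᵥ l) i| ≤ 1 := by
  simp only [unitBallSlice, mem_ofPred_eq, pi_norm_le_iff_of_nonneg zero_le_one, Pi.add_apply,
    Real.norm_eq_abs]

theorem isClosed_unitBallSlice (a : m → ℝ) : IsClosed (V.unitBallSlice a) :=
  isClosed_le (by fun_prop) continuous_const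

theorem exists_unitBallSlice_subset_closedBall (hV : Injective V.mulVec) :
    ∃ K : ℝ≥0, ∀ a, V.unitBallSlice a ⊆ Metric.closedBall 0 (K * (‖a‖ + 1)) := by
  obtain ⟨K, -, hK⟩ := V.mulVecLin.injective_iff_antilipschitz.1 hV
  refine ⟨K, fun a l (hl : ‖a + V *ᵥ l‖ ≤ 1) => ?_⟩
  rw [mem_closedBall_zero_iff]
  calc ‖l‖ ≤ K * ‖V *ᵥ l‖ := by simpa using hK.le_mul_norm_sub l 0
    _ ≤ K * (‖a‖ + 1) := by
      gcongr
      calc ‖V *ᵥ l‖ = ‖(a + V *ᵥ l) - a‖ := by rw [add_sub_cancel_left]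
        _ ≤ ‖a + V *ᵥ l‖ + ‖a‖ := norm_sub_le _ _
        _ ≤ ‖a‖ + 1 := by linarith

theorem volume_unitBallSlice_ne_top (hV : Injective V.mulVec) (a : m → ℝ) :
    volume (V.unitBallSlice a) ≠ ⊤ := by
  obtain ⟨K, hK⟩ := V.exists_unitBallSlice_subset_closedBall hV
  exact (measure_mono (hK a)).trans_lt measure_closedBall_lt_top |>.ne

theorem eventually_mem_unitBallSlice_iff {a₀ : m → ℝ}
    (ha₀ : (V.unitBallSlice a₀).Nonempty) {l : n → ℝ}
    (hl : ∀ i, V i ≠ 0 → |a₀ i + (V *ᵥ l) i| ≠ 1) :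
    ∀ᶠ a in 𝓝[{a | (V.unitBallSlice a).Nonempty}] a₀,
      (l ∈ V.unitBallSlice a ↔ l ∈ V.unitBallSlice a₀) := by
  simp only [mem_unitBallSlice_iff]
  refine (eventually_all.2 fun i => ?_).mono fun a ha => forall_congr' ha
  by_cases hi : V i = 0
  · have hVi : ∀ l', (V *ᵥ l') i = 0 := fun l' => by simp [mulVec, dotProduct, hi]
    have bound : ∀ a, (V.unitBallSlice a).Nonempty → |a i + (V *ᵥ l) i| ≤ 1 :=
      fun a ⟨l', hl'⟩ => by simpa [hVi] using (V.mem_unitBallSlice_iff.1 hl') i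
    exact eventually_nhdsWithin_of_forall fun a ha => iff_of_true (bound a ha) (bound a₀ ha₀)
  · exact nhdsWithin_le_nhds ((by fun_prop : Continuous fun a : m → ℝ =>
      |a i + (V *ᵥ l) i|).continuousAt.eventually_le_const_iff (hl i hi))

theorem continuousOn_volume_unitBallSlice (hV : Injective V.mulVec) :
    ContinuousOn (fun a => volume (V.unitBallSlice a)) {a | (V.unitBallSlice a).Nonempty} := by
  intro a₀ ha₀
  obtain ⟨K, hK⟩ := V.exists_unitBallSlice_subset_closedBall hV
  have hnear : ∀ᶠ a in 𝓝[{a | (V.unitBallSlice a).Nonempty}] a₀,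
      V.unitBallSlice a ⊆ Metric.closedBall 0 (K * (‖a₀‖ + 2)) := by
    filter_upwards [nhdsWithin_le_nhds
      (continuous_norm.continuousAt.eventually_lt_const (lt_add_one ‖a₀‖))] with a ha
    exact (hK a).trans <| Metric.closedBall_subset_closedBall <|
      mul_le_mul_of_nonneg_left (by linarith) K.2
  refine tendsto_measure_of_ae_tendsto_indicator _ (V.isClosed_unitBallSlice a₀).measurableSet
    (fun a => (V.isClosed_unitBallSlice a).measurableSet) measurableSet_closedBall
    measure_closedBall_lt_top.ne hnear ?_
  filter_upwards [V.ae_abs_add_mulVec_apply_ne a₀ 1] with l hl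
  exact V.eventually_mem_unitBallSlice_iff ha₀ hl

end Matrix

/-- With `U, V` as in Statement 6, the map
`𝒱(y) := Leb_{d−p}(Q_y)` is continuous on the compact set `Δ`. -/
theorem stmt_7 (d p : ℕ) (hpd : p < d)
    (U : Matrix (Fin d) (Fin p) ℝ) (V : Matrix (Fin d) (Fin (d - p)) ℝ)
    (hUV : IsUnit ((Matrix.fromCols U V).submatrix id fun j : Fin d =>
      finSumFinEquiv.symm (Fin.cast (by omega : d = p + (d - p)) j)).det) :
    ContinuousOn
      (fun y : Fin p → ℝ =>
        (volume {l : Fin (d - p) → ℝ | ‖U.mulVec y + V.mulVec l‖ ≤ 1}).toReal)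
      {y : Fin p → ℝ | ∃ l : Fin (d - p) → ℝ, ‖U.mulVec y + V.mulVec l‖ ≤ 1} := by
  have hV : Injective V.mulVec :=
    mulVec_injective_of_isUnit_det_submatrix_fromCols
      ((finCongr (by omega : d = p + (d - p))).trans finSumFinEquiv.symm) hUV
  have hvol : ContinuousOn (fun y => volume (V.unitBallSlice (U *ᵥ y)))
      {y | (V.unitBallSlice (U *ᵥ y)).Nonempty} :=
    (V.continuousOn_volume_unitBallSlice hV).comp (by fun_prop : Continuous U.mulVec).continuousOn
      fun _ => id
  exact ENNReal.continuousOn_toReal.comp hvol fun y _ => V.volume_unitBallSlice_ne_top hV _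
end

section
/- Let (W, 𝒲, ν) be a σ-finite measure space, α ∈ (0,2), and let f : W × ℤ^d → ℝ be jointly measurable with ∫_W Σ_{u ∈ ℤ^d} |f(v,u)|^α ν(dv) < ∞. For v ∈ W and i ≥ 1, let f_i⁺(v) := sup{c > 0 : #{u ∈ ℤ^d : f⁺(v,u) ≥ c} ≥ i} (with sup ∅ := 0) denote the i-th largest value of the family (f⁺(v,u))_{u ∈ ℤ^d}, and define f_i⁻(v) analogously from (f⁻(v,u))_{u ∈ ℤ^d}. Then for all m ≥ 1 and all y₁, …, y_m > 0, (Leb|_{[-1,1]^d} ⊗ ν_α ⊗ ν)({(t,x,v) ∈ [-1,1]^d × (ℝ∖{0}) × W : for every i ∈ {1,…,m}, #{u ∈ ℤ^d : x f(v,u) > y_i} ≥ i}) = 2^d ∫_W [ min_{1≤i≤m} (f_i⁺(v)/y_i)^α + min_{1≤i≤m} (f_i⁻(v)/y_i)^α ] ν(dv). -/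
/-!
For fixed `v` the event is a condition on `x` alone. For `x > 0`, "at least `i` of the
`x f(v,u)` exceed `y_i`" means `y_i / x < f_i⁺(v)`, i.e. `x^{-α} < (f_i⁺(v)/y_i)^α`, so the
section over `(0,∞)` is `{x : x^{-α} < min_i (f_i⁺(v)/y_i)^α}`, whose `ν_α`-mass is exactly
that minimum since `ν_α(x,∞) = x^{-α}`. The section over `(-∞,0)` is the reflection of the one for
`-f`, and `ν_α` is symmetric. Tonelli and `Leb([-1,1]^d) = 2^d` conclude. Integrability of
`|f|^α` makes `f(v,·)` bounded for a.e. `v`, so that the `sSup` defining `f_i^±(v)` is a genuine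
supremum rather than the junk value of an unbounded set.
-/

open MeasureTheory ENNReal Set

theorem Set.natCast_le_encard_iff {ι : Type*} {s : Set ι} {k : ℕ} :
    (k : ℕ∞) ≤ s.encard ↔ ∃ t : Finset ι, t.card = k ∧ ↑t ⊆ s := by
  constructor
  · intro h
    obtain ⟨t, hts, htk⟩ := exists_subset_encard_eq h
    have htfin : t.Finite := finite_of_encard_eq_coe htk
    refine ⟨htfin.toFinset, ?_, by simpa using hts⟩
    rw [htfin.encard_eq_coe_toFinset_card] at htk
    exact_mod_cast htk
  · rintro ⟨t, rfl, hts⟩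
    simpa using encard_mono hts

theorem lt_ciInf_iff_of_finite {ι α : Type*} [Nonempty ι] [Finite ι]
    [ConditionallyCompleteLinearOrder α] {f : ι → α} {a : α} :
    a < ⨅ i, f i ↔ ∀ i, a < f i := by
  refine ⟨fun h i => h.trans_le (ciInf_le (Finite.bddBelow_range f) i), fun h => ?_⟩
  obtain ⟨i, hi⟩ := exists_eq_ciInf_of_finite (f := f)
  exact hi ▸ h i

theorem bddAbove_range_abs_of_tsum_ne_top {ι : Type*} {g : ι → ℝ} {α : ℝ} (hα : 0 < α)
    (h : ∑' u, ENNReal.ofReal (|g u| ^ α) ≠ ⊤) : BddAbove (range fun u => |g u|) := by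
  set T := ∑' u, ENNReal.ofReal (|g u| ^ α)
  refine ⟨T.toReal ^ α⁻¹, forall_mem_range.2 fun u => ?_⟩
  have hu : |g u| ^ α ≤ T.toReal := (ofReal_le_iff_le_toReal h).1 (ENNReal.le_tsum u)
  calc |g u| = (|g u| ^ α) ^ α⁻¹ := (Real.rpow_rpow_inv (abs_nonneg _) hα.ne').symm
    _ ≤ _ := Real.rpow_le_rpow (by positivity) hu (inv_nonneg.2 hα.le)

theorem volume_Icc_neg_one_one_pi (ι : Type*) [Fintype ι] :
    volume (Icc (-1 : ι → ℝ) 1) = ENNReal.ofReal (2 ^ Fintype.card ι) := by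
  simp [Real.volume_Icc_pi, one_add_one_eq_two, ofReal_pow]

noncomputable def levyMeasure (α : ℝ) : Measure ℝ :=
  volume.withDensity fun x => ENNReal.ofReal (α * |x| ^ (-α - 1))

instance (α : ℝ) : (levyMeasure α).IsNegInvariant := by
  refine ⟨Measure.ext fun s hs => ?_⟩
  have hneg : MeasurePreserving (fun x : ℝ => -x) volume volume :=
    Measure.measurePreserving_neg _
  have hemb : MeasurableEmbedding (fun x : ℝ => -x) := (Homeomorph.neg ℝ).measurableEmbedding
  rw [Measure.neg_apply, levyMeasure, ← Set.neg_preimage,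
    withDensity_apply _ (hs.preimage measurable_neg), withDensity_apply _ hs,
    ← hneg.setLIntegral_comp_preimage_emb hemb _ s]
  simp only [abs_neg]

theorem levyMeasure_Ioi {α : ℝ} (hα : 0 < α) {b : ℝ} (hb : 0 < b) :
    levyMeasure α (Ioi b) = ENNReal.ofReal (b ^ (-α)) := by
  have hint : IntegrableOn (fun x : ℝ => α * x ^ (-α - 1)) (Ioi b) :=
    (integrableOn_Ioi_rpow_of_lt (by linarith) hb).const_mul α
  rw [levyMeasure, withDensity_apply _ measurableSet_Ioi,
    setLIntegral_congr_fun measurableSet_Ioi fun x (hx : b < x) => by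
      rw [abs_of_pos (hb.trans hx)],
    ← ofReal_integral_eq_lintegral_ofReal hint, integral_const_mul,
    integral_Ioi_rpow_of_lt (by linarith) hb]
  · congr 1
    rw [show -α - 1 + 1 = -α by ring]
    field_simp
  · filter_upwards [self_mem_ae_restrict measurableSet_Ioi] with x (hx : b < x)
    have := hb.trans hx
    positivity

theorem levyMeasure_setOf_rpow_neg_lt {α : ℝ} (hα : 0 < α) {t : ℝ} (ht : 0 ≤ t) :
    levyMeasure α {x | 0 < x ∧ x ^ (-α) < t} = ENNReal.ofReal t := by
  rcases ht.eq_or_lt with rfl | ht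
  · have hempty : {x : ℝ | 0 < x ∧ x ^ (-α) < 0} = ∅ :=
      eq_empty_of_forall_notMem fun x ⟨hx, hlt⟩ => (Real.rpow_pos_of_pos hx _).not_gt hlt
    rw [hempty, measure_empty, ofReal_zero]
  · have hα' : -α < 0 := neg_lt_zero.2 hα
    have hb : 0 < t ^ (-α)⁻¹ := Real.rpow_pos_of_pos ht _
    have hset : {x | 0 < x ∧ x ^ (-α) < t} = Ioi (t ^ (-α)⁻¹) := by
      ext x
      constructor
      · rintro ⟨hx, hxt⟩
        exact (Real.rpow_inv_lt_iff_of_neg ht hx hα').2 hxt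
      · intro (hbx : t ^ (-α)⁻¹ < x)
        have hx : 0 < x := hb.trans hbx
        exact ⟨hx, (Real.rpow_inv_lt_iff_of_neg ht hx hα').1 hbx⟩
    rw [hset, levyMeasure_Ioi hα hb, Real.rpow_inv_rpow ht.le hα'.ne]

/-- The `k`-th largest positive value of `g`; `0` if there are fewer than `k` (`sSup ∅ = 0`). -/
noncomputable def orderStat {ι : Type*} (g : ι → ℝ) (k : ℕ) : ℝ :=
  sSup {c : ℝ | 0 < c ∧ (k : ℕ∞) ≤ {u | c ≤ g u}.encard}

theorem orderStat_nonneg {ι : Type*} (g : ι → ℝ) (k : ℕ) : 0 ≤ orderStat g k :=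
  Real.sSup_nonneg fun _ hc => hc.1.le

theorem lt_orderStat_iff {ι : Type*} {g : ι → ℝ} (hg : BddAbove (range g)) {k : ℕ}
    (hk : 1 ≤ k) {c : ℝ} (hc : 0 < c) :
    c < orderStat g k ↔ (k : ℕ∞) ≤ {u | c < g u}.encard := by
  obtain ⟨M, hM⟩ := hg
  have hbdd : BddAbove {c : ℝ | 0 < c ∧ (k : ℕ∞) ≤ {u | c ≤ g u}.encard} := by
    refine ⟨M, fun c' ⟨_, hcard⟩ => ?_⟩
    obtain ⟨u, hu⟩ : {u | c' ≤ g u}.Nonempty :=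
      one_le_encard_iff_nonempty.1 (le_trans (by exact_mod_cast hk) hcard)
    exact hu.trans (hM (mem_range_self u))
  constructor
  · intro h
    have hne : {c : ℝ | 0 < c ∧ (k : ℕ∞) ≤ {u | c ≤ g u}.encard}.Nonempty := by
      contrapose! h
      rw [orderStat, h, Real.sSup_empty]
      exact hc.le
    obtain ⟨c', ⟨-, hc'k⟩, hcc'⟩ := exists_lt_of_lt_csSup hne h
    exact hc'k.trans (encard_mono fun u (hu : c' ≤ g u) => hcc'.trans_le hu)
  · intro h
    obtain ⟨t, htk, hts⟩ := natCast_le_encard_iff.1 h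
    have htne : t.Nonempty := Finset.card_pos.1 (htk ▸ hk)
    have hct : c < t.inf' htne g := (Finset.lt_inf'_iff htne).2 fun u hu => hts hu
    refine hct.trans_le (le_csSup hbdd ⟨hc.trans hct, natCast_le_encard_iff.2 ⟨t, htk, ?_⟩⟩)
    exact fun u hu => Finset.inf'_le g hu

theorem le_encard_setOf_lt_mul_iff {ι : Type*} {g : ι → ℝ} (hg : BddAbove (range g)) {k : ℕ}
    (hk : 1 ≤ k) {α x y : ℝ} (hα : 0 < α) (hx : 0 < x) (hy : 0 < y) :
    (k : ℕ∞) ≤ {u | y < x * g u}.encard ↔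
      x ^ (-α) < (orderStat (fun u => max (g u) 0) k / y) ^ α := by
  obtain ⟨M, hM⟩ := hg
  have hg' : BddAbove (range fun u => max (g u) 0) :=
    ⟨max M 0, forall_mem_range.2 fun u => max_le_max_right 0 (hM (mem_range_self u))⟩
  have hset : {u | y < x * g u} = {u | y / x < max (g u) 0} := by
    ext u
    rw [mem_ofPred_eq, mem_ofPred_eq, lt_max_iff, or_iff_left (div_pos hy hx).not_gt,
      div_lt_iff₀' hx]
  rw [hset, ← lt_orderStat_iff hg' hk (div_pos hy hx), Real.rpow_neg hx.le,
    ← Real.inv_rpow hx.le,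
    Real.rpow_lt_rpow_iff (inv_nonneg.2 hx.le) (div_nonneg (orderStat_nonneg _ _) hy.le) hα,
    lt_div_iff₀ hy, inv_mul_eq_div]

def ExceedsLevels {ι : Type*} {m : ℕ} (y : Fin m → ℝ) (g : ι → ℝ) : Prop :=
  ∀ i : Fin m, ((i : ℕ) + 1 : ℕ∞) ≤ {u | y i < g u}.encard

theorem measurableSet_exceedsLevels {β ι : Type*} [MeasurableSpace β] [Countable ι] {m : ℕ}
    (y : Fin m → ℝ) {F : β → ι → ℝ} (hF : ∀ u, Measurable fun p => F p u) :
    MeasurableSet {p | ExceedsLevels y (F p)} := by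
  have hk (k : ℕ) (c : ℝ) : MeasurableSet {p | (k : ℕ∞) ≤ {u | c < F p u}.encard} := by
    have hunion : {p | (k : ℕ∞) ≤ {u | c < F p u}.encard} =
        ⋃ t : {t : Finset ι // t.card = k}, ⋂ u ∈ t.1, {p | c < F p u} := by
      ext p
      simp only [mem_ofPred_eq, natCast_le_encard_iff, mem_iUnion, mem_iInter, Subtype.exists]
      exact ⟨fun ⟨t, htk, hts⟩ => ⟨t, htk, fun u hu => hts hu⟩,
        fun ⟨t, htk, hts⟩ => ⟨t, htk, fun u hu => hts u hu⟩⟩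
    rw [hunion]
    exact .iUnion fun t => .biInter t.1.countable_toSet fun u _ =>
      measurableSet_lt measurable_const (hF u)
  simpa only [ExceedsLevels, ofPred_forall, Nat.cast_add, Nat.cast_one] using
    MeasurableSet.iInter fun i : Fin m => hk (i + 1) (y i)

theorem setOf_pos_exceedsLevels_mul_eq {ι : Type*} {g : ι → ℝ} (hg : BddAbove (range g))
    {m : ℕ} [NeZero m] {y : Fin m → ℝ} (hy : ∀ i, 0 < y i) {α : ℝ} (hα : 0 < α) :
    {x | 0 < x ∧ ExceedsLevels y fun u => x * g u} =
      {x | 0 < x ∧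
        x ^ (-α) < ⨅ i : Fin m, (orderStat (fun u => max (g u) 0) (i + 1) / y i) ^ α} := by
  ext x
  refine and_congr_right fun hx => ?_
  rw [lt_ciInf_iff_of_finite]
  exact forall_congr' fun i => by
    exact_mod_cast le_encard_setOf_lt_mul_iff hg (Nat.le_add_left 1 i) hα hx (hy i)

theorem levyMeasure_setOf_ne_zero_exceedsLevels_mul {ι : Type*} {g : ι → ℝ}
    (hg : BddAbove (range fun u => |g u|)) {m : ℕ} [NeZero m] {y : Fin m → ℝ}
    (hy : ∀ i, 0 < y i) {α : ℝ} (hα : 0 < α) :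
    levyMeasure α {x | x ≠ 0 ∧ ExceedsLevels y fun u => x * g u} =
      ENNReal.ofReal ((⨅ i : Fin m, (orderStat (fun u => max (g u) 0) (i + 1) / y i) ^ α) +
        ⨅ i : Fin m, (orderStat (fun u => max (-g u) 0) (i + 1) / y i) ^ α) := by
  obtain ⟨M, hM⟩ := hg
  have hgM : ∀ u, |g u| ≤ M := fun u => hM (mem_range_self u)
  have hpos : BddAbove (range g) :=
    ⟨M, forall_mem_range.2 fun u => (le_abs_self _).trans (hgM u)⟩
  have hneg : BddAbove (range fun u => -g u) :=
    ⟨M, forall_mem_range.2 fun u => (neg_le_abs _).trans (hgM u)⟩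
  have hsplit : {x | x ≠ 0 ∧ ExceedsLevels y fun u => x * g u} =
      {x | 0 < x ∧ ExceedsLevels y fun u => x * g u} ∪
        -{x | 0 < x ∧ ExceedsLevels y fun u => x * -g u} := by
    ext x
    simp only [mem_union, mem_neg, mem_ofPred_eq, neg_mul_neg, neg_pos, ne_iff_lt_or_gt,
      or_and_right]
    tauto
  have hmeas : ∀ t : ℝ, MeasurableSet {x : ℝ | 0 < x ∧ x ^ (-α) < t} := fun t =>
    measurableSet_Ioi.inter (measurableSet_lt (measurable_id.pow_const _) measurable_const)
  have hinf : ∀ h : ι → ℝ, 0 ≤ ⨅ i : Fin m, (orderStat h (i + 1) / y i) ^ α := fun h =>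
    Real.iInf_nonneg fun i => Real.rpow_nonneg (div_nonneg (orderStat_nonneg _ _) (hy i).le) _
  rw [hsplit, setOf_pos_exceedsLevels_mul_eq hpos hy hα,
    setOf_pos_exceedsLevels_mul_eq hneg hy hα,
    measure_union (disjoint_left.2 fun _ hx hx' => (neg_pos.1 hx'.1).not_gt hx.1) (hmeas _).neg,
    Measure.measure_neg, levyMeasure_setOf_rpow_neg_lt hα (hinf _),
    levyMeasure_setOf_rpow_neg_lt hα (hinf _), ofReal_add (hinf _) (hinf _)]

/-- the joint tail of the order statistics:
`(Leb|_{[-1,1]^d} ⊗ ν_α ⊗ ν)({(t,x,v) : #{u : x f(v,u) > y_i} ≥ i for i = 1,…,m})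
  = 2^d ∫_W [min_i (f_i⁺(v)/y_i)^α + min_i (f_i⁻(v)/y_i)^α] ν(dv)`,
where `f_i⁺(v)` (resp. `f_i⁻(v)`) is the `i`-th largest value of `(f⁺(v,u))_u`
(resp. `(f⁻(v,u))_u`), given by `sup{c > 0 : #{u : f⁺(v,u) ≥ c} ≥ i}` with `sup ∅ = 0`. -/
theorem stmt_13 (d : ℕ) {W : Type*} [MeasurableSpace W] (ν : Measure W)
    [SigmaFinite ν] (α : ℝ) (hα : α ∈ Set.Ioo (0 : ℝ) 2)
    (f : W × (Fin d → ℤ) → ℝ) (hf : Measurable f)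
    (hint : ∫⁻ v, ∑' u : Fin d → ℤ, ENNReal.ofReal (|f (v, u)| ^ α) ∂ν < ⊤)
    (fplus fminus : ℕ → W → ℝ)
    (hfplus : ∀ i v, fplus i v =
      sSup {c : ℝ | 0 < c ∧ (i : ℕ∞) ≤ {u : Fin d → ℤ | c ≤ max (f (v, u)) 0}.encard})
    (hfminus : ∀ i v, fminus i v =
      sSup {c : ℝ | 0 < c ∧ (i : ℕ∞) ≤ {u : Fin d → ℤ | c ≤ max (-f (v, u)) 0}.encard})
    (m : ℕ) (hm : 1 ≤ m) (y : Fin m → ℝ) (hy : ∀ i, 0 < y i) :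
    ((volume.restrict (Set.Icc (-1 : Fin d → ℝ) 1)).prod
        ((volume.withDensity fun x : ℝ => ENNReal.ofReal (α * |x| ^ (-α - 1))).prod ν))
      {tp : (Fin d → ℝ) × ℝ × W | tp.2.1 ≠ 0 ∧
        ∀ i : Fin m, ((i : ℕ) + 1 : ℕ∞) ≤
          {u : Fin d → ℤ | y i < tp.2.1 * f (tp.2.2, u)}.encard}
      = ENNReal.ofReal ((2 : ℝ) ^ d) *
        ∫⁻ v, ENNReal.ofReal
          ((⨅ i : Fin m, (fplus ((i : ℕ) + 1) v / y i) ^ α) +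
           (⨅ i : Fin m, (fminus ((i : ℕ) + 1) v / y i) ^ α)) ∂ν := by
  have : NeZero m := ⟨by omega⟩
  set S : Set (ℝ × W) := {p | p.1 ≠ 0 ∧ ExceedsLevels y fun u => p.1 * f (p.2, u)}
  have hS : MeasurableSet S :=
    ((measurableSet_singleton 0).compl.preimage measurable_fst).inter
      (measurableSet_exceedsLevels y fun u => by fun_prop)
  have hbdd : ∀ᵐ v ∂ν, BddAbove (range fun u => |f (v, u)|) := by
    have hmeas : Measurable fun v => ∑' u : Fin d → ℤ, ENNReal.ofReal (|f (v, u)| ^ α) := by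
      fun_prop
    filter_upwards [ae_lt_top hmeas hint.ne] with v hv
    exact bddAbove_range_abs_of_tsum_ne_top hα.1 hv.ne
  change Measure.prod _ _ (Prod.snd ⁻¹' S) = _
  rw [← univ_prod, Measure.prod_prod, Measure.restrict_apply_univ, volume_Icc_neg_one_one_pi,
    Fintype.card_fin, Measure.prod_apply_symm hS]
  congr 1
  refine lintegral_congr_ae (hbdd.mono fun v hv => ?_)
  simp only [hfplus, hfminus]
  exact levyMeasure_setOf_ne_zero_exceedsLevels_mul hv hy hα.1
end
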